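/- arXiv:1708.02060 — 4 statements merged into one kernel-verified Lean document; each statement's English description precedes it below -/
import Mathlib

section
/- Let (X,d) be a complete and separable metric space, m a Radon measure on X (a Borel measure finite on bounded sets), α ≥ 0, and define the α-upper density of m at x by θ̄_α(m,x) := limsup_{r↓0} m(B_r(x))/(ω_α r^α). Then for every Borel set B ⊆ X and every c > 0: if θ̄_α(m,x) ≥ c for all x ∈ B, then m(B) ≥ c · H^α(B). -/
open MeasureTheory Filter Set Topology
open scoped ENNReal NNReal

/-- `ω_α = π^(α/2) / Γ(α/2 + 1)`, the normalizing constant for the `α`-dimensional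
Hausdorff measure (for integer `α` it is the volume of the unit ball of `ℝ^α`). -/
noncomputable def omegaHaus (α : ℝ) : ℝ := Real.pi ^ (α / 2) / Real.Gamma (α / 2 + 1)

/-- The `α`-dimensional Hausdorff measure normalized as
`H^α(A) = lim_{δ↓0} inf {Σ_i ω_α (diam E_i / 2)^α : A ⊆ ⋃_i E_i, diam E_i ≤ δ}`,
i.e. `(ω_α / 2^α)` times Mathlib's Hausdorff measure `μH[α]`. -/
noncomputable def normHausdorffMeasure (α : ℝ) (X : Type*) [EMetricSpace X]
    [MeasurableSpace X] [BorelSpace X] : Measure X :=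
  (ENNReal.ofReal (omegaHaus α / 2 ^ α)) • μH[α]

/-- The `α`-upper density of a measure `m` at a point `x`:
`θ̄_α(m,x) = limsup_{r↓0} m(B_r(x)) / (ω_α r^α)`. -/
noncomputable def upperDensity {X : Type*} [MetricSpace X] [MeasurableSpace X]
    (α : ℝ) (m : Measure X) (x : X) : ℝ≥0∞ :=
  Filter.limsup (fun r : ℝ => m (Metric.ball x r) / ENNReal.ofReal (omegaHaus α * r ^ α))
    (𝓝[>] (0 : ℝ))

/-! If `m(B_r(x)) ≥ t r^α` for arbitrarily small `r` at every point of `s`, take such balls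
inside an open `U ⊇ s` and a disjoint Vitali subfamily of them: their radii satisfy
`t ∑ r^α ≤ m(U)`. Keeping finitely many of these balls and enlarging the others threefold still
covers `s`, so `μH[α] s ≤ 2^α ∑ r^α + (tail of the series)`, and the tail can be made
arbitrarily small. Outer regularity of `m` shrinks `U` to `s`. With `t = τ ω_α` for `τ` below
the upper density this reads `τ ω_α μH[α] B ≤ 2^α m(B)`, that is `τ H^α(B) ≤ m(B)`, since
`H^α = (ω_α / 2^α) μH[α]`. -/

open Metric

theorem omegaHaus_pos {α : ℝ} (hα : -2 < α) : 0 < omegaHaus α :=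
  div_pos (Real.rpow_pos_of_pos Real.pi_pos _) (Real.Gamma_pos_of_pos (by linarith))

section Covering

variable {X : Type*} [PseudoMetricSpace X]

theorem ediam_closedBall_rpow_le (x : X) {r : ℝ} (hr : 0 ≤ r) {α : ℝ} (hα : 0 ≤ α) :
    ediam (closedBall x r) ^ α ≤ 2 ^ α * ENNReal.ofReal r ^ α := by
  rw [← ENNReal.mul_rpow_of_nonneg _ _ hα, ← closedEBall_ofReal hr]
  exact ENNReal.rpow_le_rpow ediam_closedEBall_le hα

theorem tsum_ediam_rpow_range_closedBall_le {ι : Type*} (c : ι → X) {r : ι → ℝ}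
    (hr : ∀ i, 0 ≤ r i) {α : ℝ} (hα : 0 ≤ α) :
    ∑' B : range (fun i => closedBall (c i) (r i)), ediam (B : Set X) ^ α ≤
      2 ^ α * ∑' i, ENNReal.ofReal (r i) ^ α := by
  calc ∑' B : range (fun i => closedBall (c i) (r i)), ediam (B : Set X) ^ α
      ≤ ∑' i, ediam (closedBall (c i) (r i)) ^ α :=
        ENNReal.tsum_le_tsum_comp_of_surjective rangeFactorization_surjective _
    _ ≤ ∑' i, 2 ^ α * ENNReal.ofReal (r i) ^ α :=
        ENNReal.tsum_le_tsum fun i => ediam_closedBall_rpow_le (c i) (hr i) hα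
    _ = 2 ^ α * ∑' i, ENNReal.ofReal (r i) ^ α := ENNReal.tsum_mul_left

def vitaliTailCover (u : Set (X × ℝ)) (w : Finset u) : Set (Set X) :=
  range (fun p : w => closedBall p.1.1.1 p.1.1.2) ∪
    range (fun p : {p : u // p ∉ w} => closedBall p.1.1.1 (3 * p.1.1.2))

theorem countable_vitaliTailCover {u : Set (X × ℝ)} (hu : u.Countable) (w : Finset u) :
    (vitaliTailCover u w).Countable :=
  have := hu.to_subtype
  (countable_range _).union (countable_range _)

theorem ediam_le_of_mem_vitaliTailCover {u : Set (X × ℝ)} {R : ℝ}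
    (hu : ∀ p ∈ u, 0 ≤ p.2 ∧ p.2 ≤ R) {w : Finset u} {B : Set X} (hB : B ∈ vitaliTailCover u w) :
    ediam B ≤ ENNReal.ofReal (6 * R) := by
  have hball : ∀ (x : X) (ρ : ℝ), ρ ≤ 3 * R → ediam (closedBall x ρ) ≤ ENNReal.ofReal (6 * R) :=
    fun x ρ hρ => ediam_le_of_forall_dist_le (s := closedBall x ρ) fun a ha b hb => by
      linarith [dist_triangle_right a b x, mem_closedBall.1 ha, mem_closedBall.1 hb]
  rcases hB with ⟨⟨⟨p, hp⟩, -⟩, rfl⟩ | ⟨⟨⟨p, hp⟩, -⟩, rfl⟩ <;>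
    exact hball _ _ (by linarith [hu p hp])

theorem tsum_ediam_rpow_vitaliTailCover_le {u : Set (X × ℝ)} (hu : ∀ p ∈ u, 0 ≤ p.2)
    {α : ℝ} (hα : 0 ≤ α) (w : Finset u) :
    ∑' B : vitaliTailCover u w, ediam (B : Set X) ^ α ≤
      2 ^ α * ∑' p : u, ENNReal.ofReal p.1.2 ^ α +
        6 ^ α * ∑' p : {p : u // p ∉ w}, ENNReal.ofReal p.1.1.2 ^ α := by
  have htail : 2 ^ α * ∑' p : {p : u // p ∉ w}, ENNReal.ofReal (3 * p.1.1.2) ^ α =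
      6 ^ α * ∑' p : {p : u // p ∉ w}, ENNReal.ofReal p.1.1.2 ^ α := by
    simp_rw [ENNReal.ofReal_mul zero_le_three, ENNReal.mul_rpow_of_nonneg _ _ hα,
      ENNReal.tsum_mul_left, ← mul_assoc, ← ENNReal.mul_rpow_of_nonneg _ _ hα]
    norm_num
  calc ∑' B : vitaliTailCover u w, ediam (B : Set X) ^ α
      ≤ 2 ^ α * ∑' p : w, ENNReal.ofReal p.1.1.2 ^ α +
          2 ^ α * ∑' p : {p : u // p ∉ w}, ENNReal.ofReal (3 * p.1.1.2) ^ α :=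
        (ENNReal.tsum_union_le (fun B : Set X => ediam B ^ α) _ _).trans (add_le_add
          (tsum_ediam_rpow_range_closedBall_le _ (fun p : w => hu _ p.1.2) hα)
          (tsum_ediam_rpow_range_closedBall_le _
            (fun p : {p : u // p ∉ w} => mul_nonneg zero_le_three (hu _ p.1.2)) hα))
    _ ≤ 2 ^ α * ∑' p : u, ENNReal.ofReal p.1.2 ^ α +
          6 ^ α * ∑' p : {p : u // p ∉ w}, ENNReal.ofReal p.1.1.2 ^ α := by
      rw [htail]
      gcongr
      exact ENNReal.tsum_comp_le_tsum_of_injective Subtype.val_injective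
        (fun p : u => ENNReal.ofReal p.1.2 ^ α)

theorem exists_pairwiseDisjoint_subset_sUnion_vitaliTailCover {F : Set (X × ℝ)} {R : ℝ}
    {s : Set X} (hF₀ : ∀ p ∈ F, 0 ≤ p.2) (hFR : ∀ p ∈ F, p.2 ≤ R)
    (hF : ∀ x ∈ s, ∀ ε > 0, ∃ r < ε, (x, r) ∈ F) :
    ∃ u ⊆ F, u.PairwiseDisjoint (fun p => closedBall p.1 p.2) ∧
      ∀ w, s ⊆ ⋃₀ vitaliTailCover u w := by
  obtain ⟨u, huF, hdisj, hu⟩ := Vitali.exists_disjoint_subfamily_covering_enlargement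
    (fun p : X × ℝ => closedBall p.1 p.2) F Prod.snd 2 one_lt_two hF₀ R hFR
    fun p hp => ⟨p.1, mem_closedBall_self (hF₀ p hp)⟩
  refine ⟨u, huF, hdisj, fun w z hz => ?_⟩
  set K := ⋃ p ∈ w, closedBall p.1.1 p.1.2
  by_cases hzK : z ∈ K
  · obtain ⟨p, hpw, hzp⟩ := mem_iUnion₂.1 hzK
    exact mem_sUnion.2 ⟨_, Or.inl ⟨⟨p, hpw⟩, rfl⟩, hzp⟩
  have hK : IsClosed K := w.finite_toSet.isClosed_biUnion fun _ _ => isClosed_closedBall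
  obtain ⟨ε, hε, hεK⟩ := isOpen_iff.1 hK.isOpen_compl z hzK
  obtain ⟨r, hrε, hzr⟩ := hF z hz ε hε
  -- A small ball around `z` missing the balls of `w` meets a ball of `u \ w` at least half as
  -- large, whose threefold enlargement then contains `z`.
  obtain ⟨b, hbu, ⟨y, hyz, hyb⟩, hrb⟩ := hu (z, r) hzr
  have hbw : ⟨b, hbu⟩ ∉ w := fun hbw =>
    hεK (lt_of_le_of_lt hyz hrε) (mem_iUnion₂.2 ⟨_, hbw, hyb⟩)
  refine mem_sUnion.2 ⟨_, Or.inr ⟨⟨⟨b, hbu⟩, hbw⟩, rfl⟩, ?_⟩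
  have hyz : dist y z ≤ r := hyz
  have hyb : dist y b.1 ≤ b.2 := hyb
  show dist z b.1 ≤ 3 * b.2
  linarith [dist_triangle_left z b.1 y]

end Covering

theorem hausdorffMeasure_le_of_forall_countable_cover {X : Type*} [EMetricSpace X]
    [MeasurableSpace X] [BorelSpace X] {d : ℝ} {s : Set X} {C : ℝ≥0∞}
    (h : ∀ δ : ℝ, 0 < δ → ∃ 𝒯 : Set (Set X), 𝒯.Countable ∧ s ⊆ ⋃₀ 𝒯 ∧
      (∀ B ∈ 𝒯, ediam B ≤ ENNReal.ofReal δ) ∧ ∑' B : 𝒯, ediam (B : Set X) ^ d ≤ C) :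
    μH[d] s ≤ C := by
  choose 𝒯 h𝒯 hs hdiam hsum using fun n : ℕ => h (1 / (n + 1)) Nat.one_div_pos_of_nat
  have := fun n => (h𝒯 n).to_subtype
  have hδ : Tendsto (fun n : ℕ => ENNReal.ofReal (1 / (n + 1))) atTop (𝓝 0) := by
    simpa using ENNReal.tendsto_ofReal tendsto_one_div_add_atTop_nhds_zero_nat
  refine (Measure.hausdorffMeasure_le_liminf_tsum d s _ hδ (fun n (B : 𝒯 n) => (B : Set X))
    (.of_forall fun n B => hdiam n B B.2) (.of_forall fun n => ?_)).trans
    (liminf_le_of_frequently_le' (.of_forall hsum))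
  rw [← sUnion_eq_iUnion]
  exact hs n

theorem mul_hausdorffMeasure_le_measure_of_isOpen {X : Type*} [MetricSpace X]
    [MeasurableSpace X] [BorelSpace X] (m : Measure X) {α : ℝ} (hα : 0 ≤ α) {t : ℝ≥0∞} {s U : Set X}
    (hU : IsOpen U) (hsU : s ⊆ U)
    (h : ∀ x ∈ s, ∃ᶠ r in 𝓝[>] (0 : ℝ), t * ENNReal.ofReal r ^ α ≤ m (ball x r)) :
    t * μH[α] s ≤ 2 ^ α * m U := by
  rcases eq_or_ne t 0 with rfl | ht
  · simp
  rcases eq_or_ne (m U) ∞ with hmU | hmU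
  · simp [hmU, (ENNReal.rpow_pos two_pos ENNReal.ofNat_ne_top).ne']
  suffices μH[α] s ≤ 2 ^ α * (m U / t) from calc
    t * μH[α] s ≤ t * (2 ^ α * (m U / t)) := by gcongr
    _ = 2 ^ α * (t * (m U / t)) := mul_left_comm _ _ _
    _ ≤ 2 ^ α * m U := by gcongr; exact ENNReal.mul_div_le
  refine ENNReal.le_of_forall_pos_le_add fun η hη _ =>
    hausdorffMeasure_le_of_forall_countable_cover fun δ hδ => ?_
  set F : Set (X × ℝ) := {p | 0 < p.2 ∧ p.2 ≤ δ / 6 ∧ ball p.1 p.2 ⊆ U ∧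
    t * ENNReal.ofReal p.2 ^ α ≤ m (ball p.1 p.2)}
  have hF : ∀ x ∈ s, ∀ ε > 0, ∃ r < ε, (x, r) ∈ F := by
    intro x hx ε hε
    obtain ⟨ε', hε', hxU⟩ := isOpen_iff.1 hU x (hsU hx)
    obtain ⟨r, hr, hr'⟩ := ((h x hx).and_eventually
      (Ioo_mem_nhdsGT (show 0 < min ε (min ε' (δ / 6)) by positivity))).exists
    simp only [lt_min_iff] at hr'
    exact ⟨r, hr'.2.1, hr'.1, hr'.2.2.2.le, (ball_subset_ball hr'.2.2.1.le).trans hxU, hr⟩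
  obtain ⟨u, huF, hdisj, hcover⟩ := exists_pairwiseDisjoint_subset_sUnion_vitaliTailCover
    (fun p hp => hp.1.le) (fun p hp => hp.2.1) hF
  have hmass : ∑' p : u, t * ENNReal.ofReal p.1.2 ^ α ≤ m U := calc
    _ ≤ ∑' p : u, m (ball p.1.1 p.1.2) := ENNReal.tsum_le_tsum fun p => (huF p.2).2.2.2
    _ ≤ m (⋃ p : u, ball p.1.1 p.1.2) :=
      tsum_meas_le_meas_iUnion_of_disjoint m (fun _ => measurableSet_ball) fun p q hpq =>
        (hdisj p.2 q.2 (Subtype.coe_ne_coe.2 hpq)).mono ball_subset_closedBall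
          ball_subset_closedBall
    _ ≤ m U := measure_mono (iUnion_subset fun p => (huF p.2).2.2.1)
  rw [ENNReal.tsum_mul_left] at hmass
  have hS : ∑' p : u, ENNReal.ofReal p.1.2 ^ α ≤ m U / t :=
    (ENNReal.le_div_iff_mul_le (.inl ht) (.inr hmU)).2 (by rwa [mul_comm])
  have hSfin : ∑' p : u, ENNReal.ofReal p.1.2 ^ α ≠ ∞ :=
    ne_top_of_le_ne_top (ENNReal.div_ne_top hmU ht) hS
  have hu : u.Countable := by
    have hpos : ∀ p : u, 0 < ENNReal.ofReal p.1.2 ^ α := fun p =>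
      ENNReal.rpow_pos (ENNReal.ofReal_pos.2 (huF p.2).1) ENNReal.ofReal_ne_top
    exact countable_coe_iff.1 (countable_univ_iff.1
      ((Summable.countable_support_ennreal hSfin).mono fun p _ => (hpos p).ne'))
  obtain ⟨w, hw⟩ : ∃ w : Finset u,
      6 ^ α * ∑' p : {p : u // p ∉ w}, ENNReal.ofReal p.1.1.2 ^ α < η := by
    have := ENNReal.Tendsto.const_mul (ENNReal.tendsto_tsum_compl_atTop_zero hSfin)
      (.inr (ENNReal.rpow_ne_top_of_nonneg hα ENNReal.ofNat_ne_top)) (a := 6 ^ α)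
    rw [mul_zero] at this
    exact (this.eventually (gt_mem_nhds (ENNReal.coe_pos.2 hη))).exists
  refine ⟨vitaliTailCover u w, countable_vitaliTailCover hu w, hcover w, fun B hB => ?_, ?_⟩
  · have := ediam_le_of_mem_vitaliTailCover (fun p hp => ⟨(huF hp).1.le, (huF hp).2.1⟩) hB
    rwa [mul_div_cancel₀ _ (by norm_num : (6 : ℝ) ≠ 0)] at this
  · calc _ ≤ _ := tsum_ediam_rpow_vitaliTailCover_le (fun p hp => (huF hp).1.le) hα w
      _ ≤ 2 ^ α * (m U / t) + η := add_le_add (by gcongr) hw.le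

theorem mul_hausdorffMeasure_le_of_frequently_le_measure_ball {X : Type*} [MetricSpace X]
    [MeasurableSpace X] [BorelSpace X] (m : Measure X) [m.OuterRegular] {α : ℝ} (hα : 0 ≤ α)
    {t : ℝ≥0∞} {s : Set X}
    (h : ∀ x ∈ s, ∃ᶠ r in 𝓝[>] (0 : ℝ), t * ENNReal.ofReal r ^ α ≤ m (ball x r)) :
    t * μH[α] s ≤ 2 ^ α * m s := by
  rw [Set.measure_eq_iInf_isOpen s m]
  simp only [ENNReal.mul_iInf_of_ne (ENNReal.rpow_pos two_pos ENNReal.ofNat_ne_top).ne'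
    (ENNReal.rpow_ne_top_of_nonneg hα ENNReal.ofNat_ne_top)]
  exact le_iInf₂ fun U hsU => le_iInf fun hU =>
    mul_hausdorffMeasure_le_measure_of_isOpen m hα hU hsU h

theorem frequently_le_measure_ball_of_lt_upperDensity {X : Type*} [MetricSpace X]
    [MeasurableSpace X] {α : ℝ} (hα : -2 < α) {m : Measure X} {x : X} {t : ℝ≥0∞}
    (ht : t < upperDensity α m x) :
    ∃ᶠ r in 𝓝[>] (0 : ℝ), t * ENNReal.ofReal (omegaHaus α) * ENNReal.ofReal r ^ α ≤
      m (ball x r) := by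
  refine ((frequently_lt_of_lt_limsup (by isBoundedDefault) ht).and_eventually
    self_mem_nhdsWithin).mono fun r ⟨hlt, hr⟩ => ?_
  rw [mul_assoc, ENNReal.ofReal_rpow_of_pos hr,
    ← ENNReal.ofReal_mul (omegaHaus_pos hα).le]
  exact (ENNReal.mul_lt_of_lt_div hlt).le

theorem measure_ge_of_upperDensity_ge_general {X : Type*} [MetricSpace X]
    [TopologicalSpace.SeparableSpace X] [MeasurableSpace X] [BorelSpace X]
    (m : Measure X) (hm : ∀ s : Set X, Bornology.IsBounded s → m s < ∞)
    (α : ℝ) (hα : 0 ≤ α) (B : Set X)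
    (c : ℝ)
    (hdens : ∀ x ∈ B, ENNReal.ofReal c ≤ upperDensity α m x) :
    ENNReal.ofReal c * normHausdorffMeasure α X B ≤ m B := by
  have : IsLocallyFiniteMeasure m :=
    ⟨fun x => ⟨ball x 1, ball_mem_nhds x one_pos, hm _ isBounded_ball⟩⟩
  rw [normHausdorffMeasure, Measure.smul_apply, smul_eq_mul,
    ENNReal.ofReal_div_of_pos (Real.rpow_pos_of_pos two_pos α),
    ← ENNReal.ofReal_rpow_of_pos two_pos, ENNReal.ofReal_ofNat]
  refine ENNReal.mul_le_of_forall_lt fun t ht b hb => ?_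
  have key := mul_hausdorffMeasure_le_of_frequently_le_measure_ball m hα fun x hx =>
    frequently_le_measure_ball_of_lt_upperDensity (by linarith) (ht.trans_le (hdens x hx))
  calc t * b ≤ t * (ENNReal.ofReal (omegaHaus α) / 2 ^ α * μH[α] B) := by gcongr
    _ = t * ENNReal.ofReal (omegaHaus α) * μH[α] B / 2 ^ α := by
        simp only [div_eq_mul_inv]; ring
    _ ≤ m B := ENNReal.div_le_of_le_mul' key

/-- If `m` is a Borel measure, finite on bounded sets, on a complete separable metric
space `X`, `α ≥ 0`, `B ⊆ X` is Borel and `c > 0` is such that the `α`-upper density of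
`m` is `≥ c` at every point of `B`, then `m(B) ≥ c ⬝ H^α(B)`. -/
theorem measure_ge_of_upperDensity_ge {X : Type*} [MetricSpace X] [CompleteSpace X]
    [TopologicalSpace.SeparableSpace X] [MeasurableSpace X] [BorelSpace X]
    (m : Measure X) (hm : ∀ s : Set X, Bornology.IsBounded s → m s < ∞)
    (α : ℝ) (hα : 0 ≤ α) (B : Set X) (hB : MeasurableSet B)
    (c : ℝ) (hc : 0 < c)
    (hdens : ∀ x ∈ B, ENNReal.ofReal c ≤ upperDensity α m x) :
    ENNReal.ofReal c * normHausdorffMeasure α X B ≤ m B :=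
  measure_ge_of_upperDensity_ge_general m hm α hα B c hdens
end

section
/- Let N ∈ ℕ, N ≥ 1, and λ ≥ 1. Then there exists a constant C = C(λ,N) > 0 such that the following holds: for every open set A ⊆ B_1(0) ⊂ ℝ^N with A ≠ B_1(0) there exists a finite family of open balls B_{r_1}(y_1), …, B_{r_M}(y_M) in ℝ^N such that (i) B_{r_k}(y_k) ⊆ A for every k; (ii) for every k the set (∂B_{r_k}(y_k) ∩ ∂A) \ ∂B_1(0) is nonempty; (iii) the enlarged balls B_{λ r_1}(y_1), …, B_{λ r_M}(y_M) are pairwise disjoint; and (iv) L^N(A) ≤ C · Σ_{k=1}^M r_k^N, where L^N is Lebesgue measure on ℝ^N. Moreover one may take C(λ,N) = 2 ω_N (3λ)^N, where ω_N is the Lebesgue measure of the unit ball of ℝ^N. -/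
/-!
Every `x ∈ A` lies in a ball `B ⊆ A` whose sphere meets `∂A` strictly inside the unit ball: slide
the centre from `x` towards the origin until the largest ball in `A` around it stops touching the
unit sphere. Finitely many such balls cover a compact `K ⊆ A` with `L^N(K) ≥ (3/4) L^N(A)`. Vitali's
lemma with an enlargement factor `τ > 1` close to `1` extracts a subfamily whose `λ`-enlargements
are disjoint while its `(2τ + 1)λ`-enlargements still cover `K`, and `(4/3) (2τ + 1)^N ≤ 2 · 3^N`.
-/

open MeasureTheory Metric Set
open scoped ENNReal

section Geometry

variable {E : Type*} [NormedAddCommGroup E] [NormedSpace ℝ E]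

/-- Move the centre along the segment from `x` to `c`: by the intermediate value theorem,
`R - dist y c - infDist y Aᶜ` takes a value in `(0, R - dist x c)`, which is all that is needed. -/
theorem exists_dist_lt_infDist_compl_and_dist_add_infDist_lt {A : Set E} (hA : IsOpen A)
    {c x z : E} {R : ℝ} (hx : x ∈ A) (hxc : x ∈ ball c R) (hz : z ∈ ball c R) (hzA : z ∉ A) :
    ∃ y, dist x y < infDist y Aᶜ ∧ dist y c + infDist y Aᶜ < R := by
  set d := dist x c
  let p : ℝ → E := AffineMap.lineMap x c
  let ψ : ℝ → ℝ := fun s => R - dist (p s) c - infDist (p s) Aᶜ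
  have hψ : Continuous ψ := by
    have hp : Continuous p := AffineMap.lineMap_continuous
    exact (continuous_const.sub (hp.dist continuous_const)).sub
      ((continuous_infDist_pt _).comp hp)
  have hdR : d < R := mem_ball.1 hxc
  have hψ₀ : ψ 0 < R - d := by
    have : 0 < infDist x Aᶜ := (hA.isClosed_compl.notMem_iff_infDist_pos ⟨z, hzA⟩).1 (by simpa)
    simp only [ψ, p, AffineMap.lineMap_apply_zero]
    linarith
  have hψ₁ : 0 < ψ 1 := by
    have h₁ : infDist c Aᶜ ≤ dist c z := infDist_le_dist_of_mem hzA
    have h₂ : dist c z < R := by rw [dist_comm]; exact mem_ball.1 hz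
    simp only [ψ, p, AffineMap.lineMap_apply_one, dist_self]
    linarith
  obtain ⟨s, hs, hψs₀, hψsR⟩ : ∃ s ∈ Icc (0 : ℝ) 1, 0 < ψ s ∧ ψ s < R - d := by
    obtain ⟨v, hv₀, hv₁, hvR⟩ : ∃ v, 0 < v ∧ v ≤ ψ 1 ∧ v < R - d :=
      ⟨min (ψ 1) (R - d) / 2, by positivity, by linarith [min_le_left (ψ 1) (R - d)],
        by linarith [min_le_right (ψ 1) (R - d)]⟩
    by_cases h : v < ψ 0
    · exact ⟨0, left_mem_Icc.2 zero_le_one, by linarith, hψ₀⟩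
    · obtain ⟨s, hs, hsv⟩ :=
        intermediate_value_Icc zero_le_one hψ.continuousOn ⟨not_lt.1 h, hv₁⟩
      exact ⟨s, hs, hsv ▸ hv₀, hsv ▸ hvR⟩
  refine ⟨p s, ?_, ?_⟩
  · have h₁ : dist x (p s) = s * d := by
      rw [dist_comm, dist_lineMap_left, Real.norm_of_nonneg hs.1]
    have h₂ : dist (p s) c = (1 - s) * d := by
      rw [dist_lineMap_right, Real.norm_of_nonneg (sub_nonneg.2 hs.2)]
    simp only [ψ, h₂] at hψsR
    rw [h₁]
    linarith
  · simp only [ψ] at hψs₀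
    linarith

theorem exists_ball_subset_and_frontier_inter_diff_nonempty [ProperSpace E] {A : Set E}
    (hA : IsOpen A) {c x z : E} {R : ℝ} (hx : x ∈ A) (hxc : x ∈ ball c R) (hz : z ∈ ball c R)
    (hzA : z ∉ A) :
    ∃ y r, 0 < r ∧ x ∈ ball y r ∧ ball y r ⊆ A ∧
      ((frontier (ball y r) ∩ frontier A) \ frontier (ball c R)).Nonempty := by
  obtain ⟨y, hxy, hyR⟩ := exists_dist_lt_infDist_compl_and_dist_add_infDist_lt hA hx hxc hz hzA
  set r := infDist y Aᶜ
  have hr : 0 < r := dist_nonneg.trans_lt hxy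
  have hyA : ball y r ⊆ A := by simpa using ball_infDist_subset_compl (x := y) (s := Aᶜ)
  obtain ⟨w, hwA, hwr⟩ := hA.isClosed_compl.exists_infDist_eq_dist ⟨z, hzA⟩ y
  have hw : w ∈ sphere y r := by rw [mem_sphere, dist_comm, ← hwr]
  refine ⟨y, r, hr, mem_ball.2 hxy, hyA, w, ⟨?_, ?_⟩, fun hwc => ?_⟩
  · rwa [frontier_ball y hr.ne']
  · rw [hA.frontier_eq]
    exact ⟨closure_mono hyA (closure_ball y hr.ne' ▸ sphere_subset_closedBall hw), hwA⟩
  · have : dist w c ≤ dist w y + dist y c := dist_triangle w y c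
    rw [mem_sphere.1 (frontier_ball_subset_sphere hwc), mem_sphere.1 hw] at this
    linarith

end Geometry

theorem Finset.exists_subset_pairwiseDisjoint_ball_and_biUnion_ball_subset {α ι : Type*}
    [PseudoMetricSpace α] (t : Finset ι) (y : ι → α) {r : ι → ℝ} (hr : ∀ i ∈ t, 0 < r i)
    {lam τ : ℝ} (hlam : 1 ≤ lam) (hτ : 1 < τ) :
    ∃ u ⊆ t, (u : Set ι).PairwiseDisjoint (fun i => ball (y i) (lam * r i)) ∧
      ⋃ i ∈ t, ball (y i) (r i) ⊆ ⋃ i ∈ u, ball (y i) ((2 * τ + 1) * lam * r i) := by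
  have hlr : ∀ i ∈ t, 0 < lam * r i := fun i hi => mul_pos (by linarith) (hr i hi)
  obtain ⟨R, hR⟩ := (t.finite_toSet.image fun i => lam * r i).bddAbove
  obtain ⟨u, hut, hdisj, hcov⟩ := Vitali.exists_disjoint_subfamily_covering_enlargement
    (fun i => ball (y i) (lam * r i)) t (fun i => lam * r i) τ hτ (fun i hi => (hlr i hi).le)
    R (fun i hi => hR (Set.mem_image_of_mem _ hi)) (fun i hi => nonempty_ball.2 (hlr i hi))
  lift u to Finset ι using t.finite_toSet.subset hut
  refine ⟨u, Finset.coe_subset.1 hut, hdisj, iUnion₂_subset fun i hi p hp => ?_⟩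
  obtain ⟨j, hj, ⟨q, hqi, hqj⟩, hij⟩ := hcov i hi
  refine Set.mem_biUnion hj (mem_ball.2 ?_)
  have hri : r i ≤ lam * r i := le_mul_of_one_le_left (hr i hi).le hlam
  calc dist p (y j) ≤ dist p (y i) + dist (y i) q + dist q (y j) := dist_triangle4 _ _ _ _
    _ < r i + lam * r i + lam * r j :=
        add_lt_add (add_lt_add (mem_ball.1 hp) (mem_ball'.1 hqi)) (mem_ball.1 hqj)
    _ ≤ (2 * τ + 1) * lam * r j := by nlinarith

theorem exists_one_lt_two_mul_add_one_pow_le (d : ℕ) :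
    ∃ τ : ℝ, 1 < τ ∧ (2 * τ + 1) ^ d ≤ 3 / 2 * 3 ^ d := by
  have h : ∀ᶠ τ in nhds (1 : ℝ), (2 * τ + 1) ^ d < 3 / 2 * 3 ^ d :=
    (by fun_prop : Continuous fun τ : ℝ => (2 * τ + 1) ^ d).continuousAt.eventually_lt
      continuousAt_const (by norm_num)
  obtain ⟨τ, hτd, hτ⟩ := ((h.filter_mono nhdsWithin_le_nhds).and
    (self_mem_nhdsWithin (s := Ioi 1))).exists
  exact ⟨τ, hτ, hτd.le⟩

open Module in
theorem exists_finset_pairwiseDisjoint_ball_and_measureReal_le {E : Type*}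
    [NormedAddCommGroup E] [NormedSpace ℝ E] [FiniteDimensional ℝ E] [MeasurableSpace E]
    [BorelSpace E] (μ : Measure E) [μ.IsAddHaarMeasure] {A : Set E} (hA : IsOpen A)
    (hAμ : μ A ≠ ∞) (y : E → E) {r : E → ℝ} (hr : ∀ x ∈ A, 0 < r x)
    (hxy : ∀ x ∈ A, x ∈ ball (y x) (r x)) {lam : ℝ} (hlam : 1 ≤ lam) :
    ∃ s : Finset E, ↑s ⊆ A ∧ (s : Set E).PairwiseDisjoint (fun x => ball (y x) (lam * r x)) ∧
      μ.real A ≤ 2 * μ.real (ball 0 1) * (3 * lam) ^ finrank ℝ E * ∑ x ∈ s, r x ^ finrank ℝ E := by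
  set d := finrank ℝ E
  obtain ⟨K, hKA, hK, hAK⟩ : ∃ K ⊆ A, IsCompact K ∧ 3 / 4 * μ.real A ≤ μ.real K := by
    rcases (measureReal_nonneg (μ := μ) (s := A)).eq_or_lt with h | h
    · exact ⟨∅, empty_subset _, isCompact_empty, by rw [← h]; simp⟩
    have hμA : ENNReal.ofReal (3 / 4 * μ.real A) < μ A :=
      (ENNReal.ofReal_lt_iff_lt_toReal (by positivity) hAμ).2 (by rw [← measureReal_def]; linarith)
    obtain ⟨K, hKA, hK, hμK⟩ := hA.exists_lt_isCompact hμA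
    exact ⟨K, hKA, hK,
      ((ENNReal.ofReal_lt_iff_lt_toReal (by positivity) hK.measure_lt_top.ne).1 hμK).le⟩
  obtain ⟨t, htK, hKt⟩ := hK.elim_nhds_subcover (fun x => ball (y x) (r x))
    fun x hx => isOpen_ball.mem_nhds (hxy x (hKA hx))
  obtain ⟨τ, hτ, hτd⟩ := exists_one_lt_two_mul_add_one_pow_le d
  obtain ⟨s, hst, hdisj, hcov⟩ := t.exists_subset_pairwiseDisjoint_ball_and_biUnion_ball_subset y
    (fun x hx => hr x (hKA (htK x hx))) hlam hτ
  have hsA : ↑s ⊆ A := fun x hx => hKA (htK x (hst hx))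
  refine ⟨s, hsA, hdisj, ?_⟩
  have hball : ∀ x ∈ s, μ.real (ball (y x) ((2 * τ + 1) * lam * r x)) =
      (2 * τ + 1) ^ d * lam ^ d * μ.real (ball 0 1) * r x ^ d := by
    intro x hx
    have : 0 < (2 * τ + 1) * lam * r x := by have := hr x (hsA hx); positivity
    rw [measureReal_def, Measure.addHaar_ball_of_pos μ _ this, ENNReal.toReal_mul,
      ENNReal.toReal_ofReal (by positivity), measureReal_def, mul_pow, mul_pow]
    ring
  have hsum : 0 ≤ ∑ x ∈ s, r x ^ d :=
    Finset.sum_nonneg fun x hx => pow_nonneg (hr x (hsA hx)).le d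
  calc μ.real A ≤ 4 / 3 * μ.real K := by linarith
    _ ≤ 4 / 3 * ∑ x ∈ s, μ.real (ball (y x) ((2 * τ + 1) * lam * r x)) := by
        gcongr
        exact (measureReal_mono (hKt.trans hcov) (measure_biUnion_lt_top s.finite_toSet
          fun _ _ => measure_ball_lt_top).ne).trans (measureReal_biUnion_finset_le _ _)
    _ = 4 / 3 * (2 * τ + 1) ^ d * lam ^ d * μ.real (ball 0 1) * ∑ x ∈ s, r x ^ d := by
        rw [Finset.sum_congr rfl hball, ← Finset.mul_sum]
        ring
    _ ≤ 4 / 3 * (3 / 2 * 3 ^ d) * lam ^ d * μ.real (ball 0 1) * ∑ x ∈ s, r x ^ d := by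
        gcongr
    _ = 2 * μ.real (ball 0 1) * (3 * lam) ^ d * ∑ x ∈ s, r x ^ d := by
        rw [mul_pow]
        ring

theorem covering_lemma_general (N : ℕ) (lam : ℝ) (hlam : 1 ≤ lam) :
    ∃ C : ℝ, 0 < C ∧
      C = 2 * (volume (ball (0 : EuclideanSpace ℝ (Fin N)) 1)).toReal * (3 * lam) ^ N ∧
      ∀ A : Set (EuclideanSpace ℝ (Fin N)),
        IsOpen A → A ⊆ ball 0 1 → A ≠ ball 0 1 →
          ∃ (M : ℕ) (y : Fin M → EuclideanSpace ℝ (Fin N)) (r : Fin M → ℝ),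
            (∀ k, 0 < r k) ∧
            (∀ k, ball (y k) (r k) ⊆ A) ∧
            (∀ k, ((frontier (ball (y k) (r k)) ∩ frontier A) \
              frontier (ball (0 : EuclideanSpace ℝ (Fin N)) 1)).Nonempty) ∧
            (Pairwise fun k l => Disjoint (ball (y k) (lam * r k)) (ball (y l) (lam * r l))) ∧
            volume A ≤ ENNReal.ofReal (C * ∑ k, r k ^ N) := by
  have hω : 0 < (volume (ball (0 : EuclideanSpace ℝ (Fin N)) 1)).toReal :=
    ENNReal.toReal_pos (measure_ball_pos _ _ one_pos).ne' measure_ball_lt_top.ne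
  refine ⟨_, by positivity, rfl, fun A hA hA1 hAne => ?_⟩
  obtain ⟨z, hz, hzA⟩ := exists_of_ssubset (hA1.ssubset_of_ne hAne)
  choose! y r hr hxy hyA hfront using fun x (hx : x ∈ A) =>
    exists_ball_subset_and_frontier_inter_diff_nonempty hA hx (hA1 hx) hz hzA
  have hAμ : volume A ≠ ∞ := measure_ne_top_of_subset hA1 measure_ball_lt_top.ne
  obtain ⟨s, hsA, hdisj, hμA⟩ :=
    exists_finset_pairwiseDisjoint_ball_and_measureReal_le volume hA hAμ y hr hxy hlam
  set e := s.equivFin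
  have hsum : ∑ k, r (e.symm k) ^ N = ∑ x ∈ s, r x ^ N :=
    (e.symm.sum_comp fun x : s => r x ^ N).trans (s.sum_coe_sort fun x => r x ^ N)
  refine ⟨s.card, fun k => y (e.symm k), fun k => r (e.symm k), fun k => hr _ (hsA (e.symm k).2),
    fun k => hyA _ (hsA (e.symm k).2), fun k => hfront _ (hsA (e.symm k).2),
    fun k l hkl => hdisj (e.symm k).2 (e.symm l).2 fun h => hkl (e.symm.injective (Subtype.ext h)),
    ?_⟩
  rw [finrank_euclideanSpace_fin, ← hsum] at hμA
  exact (ENNReal.le_ofReal_iff_toReal_le hAμ (measureReal_nonneg.trans hμA)).2 hμA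

/-- **Covering lemma.**  For `N ≥ 1` and `λ ≥ 1` there exists `C = C(λ,N)`, and one can
take `C = 2 ω_N (3λ)^N` where `ω_N` is the volume of the unit ball of `ℝ^N`, such that:
for every open set `A ⊊ B_1(0) ⊆ ℝ^N` there is a finite family of open balls
`B_{r_k}(y_k)`, `k = 1,…,M`, with (i) `B_{r_k}(y_k) ⊆ A`; (ii) the part of
`∂B_{r_k}(y_k) ∩ ∂A` away from the unit sphere is nonempty; (iii) the enlarged balls
`B_{λ r_k}(y_k)` are pairwise disjoint; (iv) `L^N(A) ≤ C Σ_k r_k^N`. -/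
theorem covering_lemma (N : ℕ) (hN : 1 ≤ N) (lam : ℝ) (hlam : 1 ≤ lam) :
    ∃ C : ℝ, 0 < C ∧
      C = 2 * (volume (ball (0 : EuclideanSpace ℝ (Fin N)) 1)).toReal * (3 * lam) ^ N ∧
      ∀ A : Set (EuclideanSpace ℝ (Fin N)),
        IsOpen A → A ⊆ ball 0 1 → A ≠ ball 0 1 →
          ∃ (M : ℕ) (y : Fin M → EuclideanSpace ℝ (Fin N)) (r : Fin M → ℝ),
            (∀ k, 0 < r k) ∧
            (∀ k, ball (y k) (r k) ⊆ A) ∧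
            (∀ k, ((frontier (ball (y k) (r k)) ∩ frontier A) \
              frontier (ball (0 : EuclideanSpace ℝ (Fin N)) 1)).Nonempty) ∧
            (Pairwise fun k l => Disjoint (ball (y k) (lam * r k)) (ball (y l) (lam * r l))) ∧
            volume A ≤ ENNReal.ofReal (C * ∑ k, r k ^ N) :=
  covering_lemma_general N lam hlam
end

section
/- Let N ∈ ℕ, N ≥ 1, and let A ⊆ B_1(0) ⊂ ℝ^N be an open set with A ≠ B_1(0). If B = B_r(v) is an open ball with B ⊆ A and closure(B) ⊆ B_1(0), then there exists an open ball B' in ℝ^N such that B ⊆ B' ⊆ A and the set (∂B' ∩ ∂A) \ ∂B_1(0) is nonempty. -/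
open MeasureTheory Metric Set

/-- **Ball enlargement.**  Let `A ⊊ B_1(0) ⊆ ℝ^N` (`N ≥ 1`) be open.  If `B = B_r(v)`
is an open ball with `B ⊆ A` and `closure B ⊆ B_1(0)`, then there is an open ball `B'`
with `B ⊆ B' ⊆ A` such that `(∂B' ∩ ∂A) \ ∂B_1(0)` is nonempty. -/
theorem ball_enlargement (N : ℕ) (hN : 1 ≤ N)
    (A : Set (EuclideanSpace ℝ (Fin N))) (hAopen : IsOpen A)
    (hAsub : A ⊆ ball (0 : EuclideanSpace ℝ (Fin N)) 1) (hAne : A ≠ ball 0 1)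
    (v : EuclideanSpace ℝ (Fin N)) (r : ℝ) (hr : 0 < r)
    (hBA : ball v r ⊆ A)
    (hBcl : closure (ball v r) ⊆ ball (0 : EuclideanSpace ℝ (Fin N)) 1) :
    ∃ (v' : EuclideanSpace ℝ (Fin N)) (r' : ℝ), 0 < r' ∧
      ball v r ⊆ ball v' r' ∧ ball v' r' ⊆ A ∧
      ((frontier (ball v' r') ∩ frontier A) \
        frontier (ball (0 : EuclideanSpace ℝ (Fin N)) 1)).Nonempty := by
  classical
  -- a point of the unit ball outside A
  obtain ⟨q, hq1, hqA⟩ : ∃ q, q ∈ ball (0 : EuclideanSpace ℝ (Fin N)) 1 ∧ q ∉ A := by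
    by_contra h
    push_neg at h
    exact hAne (Subset.antisymm hAsub h)
  -- the compact set of "obstacles" inside the closed unit ball
  set K : Set (EuclideanSpace ℝ (Fin N)) := Aᶜ ∩ closedBall 0 1 with hK
  have hKcpt : IsCompact K := (isCompact_closedBall (0 : EuclideanSpace ℝ (Fin N)) 1).inter_left
    hAopen.isClosed_compl
  have hqK : q ∈ K := ⟨hqA, ball_subset_closedBall hq1⟩
  have hKne : K.Nonempty := ⟨q, hqK⟩
  -- `‖v‖ + r < 1`
  have hrv : ‖v‖ + r < 1 := by
    rcases eq_or_ne v 0 with h0 | h0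
    · have hnon : Nonempty (Fin N) := ⟨⟨0, hN⟩⟩
      set e : EuclideanSpace ℝ (Fin N) := EuclideanSpace.single (⟨0, hN⟩ : Fin N) (1 : ℝ) with he
      have hne : ‖e‖ = 1 := by rw [he, EuclideanSpace.norm_single]; norm_num
      have hmem : r • e ∈ closure (ball v r) := by
        rw [closure_ball v hr.ne', mem_closedBall, h0, dist_zero_right, norm_smul,
          hne, Real.norm_eq_abs, abs_of_pos hr, mul_one]
      have := hBcl hmem
      rw [mem_ball, dist_zero_right, norm_smul, hne, Real.norm_eq_abs,
        abs_of_pos hr, mul_one] at this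
      simpa [h0] using this
    · have hv0 : 0 < ‖v‖ := norm_pos_iff.mpr h0
      set p : EuclideanSpace ℝ (Fin N) := (1 + r * ‖v‖⁻¹) • v with hp
      have hmem : p ∈ closure (ball v r) := by
        rw [closure_ball v hr.ne', mem_closedBall, hp]
        have : (1 + r * ‖v‖⁻¹) • v - v = (r * ‖v‖⁻¹) • v := by
          rw [add_smul, one_smul]; abel
        rw [dist_eq_norm, this, norm_smul, Real.norm_eq_abs,
          abs_of_pos (by positivity), mul_assoc, inv_mul_cancel₀ hv0.ne', mul_one]
      have := hBcl hmem
      rw [mem_ball, dist_zero_right, hp, norm_smul, Real.norm_eq_abs,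
        abs_of_pos (by positivity), add_mul, one_mul, mul_assoc,
        inv_mul_cancel₀ hv0.ne', mul_one] at this
      linarith
  -- the shifted distance function
  set ψ : ℝ → ℝ := fun s => Metric.infDist (s • v) K - (1 - s) * ‖v‖ with hψ
  have hψc : Continuous ψ := by
    apply Continuous.sub
    · exact (Metric.continuous_infDist_pt K).comp (continuous_id.smul continuous_const)
    · continuity
  have hrinf : ∀ x : EuclideanSpace ℝ (Fin N), ball x r ⊆ A → r ≤ Metric.infDist x K := by
    intro x hx
    by_contra h
    push_neg at h
    obtain ⟨y, hyK, hyd⟩ := (Metric.infDist_lt_iff hKne).mp h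
    exact hyK.1 (hx (by rwa [mem_ball, dist_comm]))
  have hψ1 : r ≤ ψ 1 := by
    have := hrinf v hBA
    simpa [hψ] using this
  have hψ0 : ψ 0 < 1 - ‖v‖ := by
    have h1 : Metric.infDist ((0 : ℝ) • v) K ≤ dist ((0 : ℝ) • v) q :=
      Metric.infDist_le_dist_of_mem hqK
    have h2 : dist ((0 : ℝ) • v) q < 1 := by
      rw [zero_smul, dist_comm]
      simpa [mem_ball] using hq1
    simp only [hψ]
    nlinarith
  -- choose a good shift parameter `s`
  obtain ⟨s, hs0, hs1, hsr, hslt⟩ :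
      ∃ s, 0 ≤ s ∧ s ≤ 1 ∧ r ≤ ψ s ∧ ψ s < 1 - ‖v‖ := by
    by_cases h1 : ψ 1 < 1 - ‖v‖
    · exact ⟨1, zero_le_one, le_refl 1, hψ1, h1⟩
    · push_neg at h1
      by_cases h0 : r ≤ ψ 0
      · exact ⟨0, le_refl 0, zero_le_one, h0, hψ0⟩
      · push_neg at h0
        have hc : (r + (1 - ‖v‖)) / 2 ∈ Icc (ψ 0) (ψ 1) := by
          have hr2 : r ≤ (r + (1 - ‖v‖)) / 2 := by linarith
          have hr3 : (r + (1 - ‖v‖)) / 2 ≤ 1 - ‖v‖ := by linarith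
          exact ⟨le_trans h0.le hr2, le_trans hr3 h1⟩
        obtain ⟨s, hs, hval⟩ :=
          intermediate_value_Icc (zero_le_one) hψc.continuousOn hc
        exact ⟨s, hs.1, hs.2, by rw [hval]; linarith, by rw [hval]; linarith⟩
  set x : EuclideanSpace ℝ (Fin N) := s • v with hx
  set t : ℝ := (1 - s) * ‖v‖ with ht
  have ht0 : 0 ≤ t := mul_nonneg (by linarith) (norm_nonneg v)
  have hvx : dist v x = t := by
    rw [hx, ht, dist_eq_norm]
    have : v - s • v = (1 - s) • v := by rw [sub_smul, one_smul]
    rw [this, norm_smul, Real.norm_eq_abs, abs_of_nonneg (by linarith)]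
  have hxn : ‖x‖ = s * ‖v‖ := by
    rw [hx, norm_smul, Real.norm_eq_abs, abs_of_nonneg hs0]
  set r' : ℝ := Metric.infDist x K with hr'
  have hr'eq : r' = ψ s + t := by simp [hr', hψ, ht, hx]
  have hrt : r + t ≤ r' := by rw [hr'eq]; linarith
  have hr'pos : 0 < r' := lt_of_lt_of_le (by linarith) hrt
  have hlt1 : r' < 1 - ‖x‖ := by
    rw [hr'eq, hxn]
    nlinarith
  -- the enlarged ball is contained in A
  have hsubA : ball x r' ⊆ A := by
    intro z hz
    by_contra hzA
    rw [mem_ball] at hz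
    rcases le_or_gt ‖z‖ 1 with hz1 | hz1
    · have hzk : z ∈ K := ⟨hzA, by simpa [mem_closedBall, dist_zero_right] using hz1⟩
      have := Metric.infDist_le_dist_of_mem (x := x) hzk
      rw [← hr', dist_comm] at this
      linarith
    · have : ‖z‖ - ‖x‖ ≤ ‖z - x‖ := norm_sub_norm_le z x
      rw [dist_eq_norm] at hz
      linarith
  -- the containment of the original ball
  have hsubB : ball v r ⊆ ball x r' := by
    intro z hz
    rw [mem_ball] at hz ⊢
    calc dist z x ≤ dist z v + dist v x := dist_triangle z v x
    _ < r + t := by rw [hvx]; linarith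
    _ ≤ r' := hrt
  -- the touching point
  obtain ⟨y, hyK, hyd⟩ := hKcpt.exists_infDist_eq_dist hKne x
  have hydist : dist y x = r' := by rw [dist_comm, ← hyd, hr']
  have hy1 : ‖y‖ < 1 := by
    have : ‖y‖ - ‖x‖ ≤ ‖y - x‖ := norm_sub_norm_le y x
    rw [← dist_eq_norm] at this
    linarith [this, hydist, hlt1]
  refine ⟨x, r', hr'pos, hsubB, hsubA, ⟨y, ⟨?_, ?_⟩, ?_⟩⟩
  · rw [frontier_ball x hr'pos.ne']
    exact hydist
  · rw [hAopen.frontier_eq]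
    refine ⟨?_, hyK.1⟩
    have : y ∈ closure (ball x r') := by
      rw [closure_ball x hr'pos.ne', mem_closedBall]
      exact le_of_eq hydist
    exact closure_mono hsubA this
  · rw [frontier_ball (0 : EuclideanSpace ℝ (Fin N)) one_ne_zero]
    intro hy
    rw [mem_sphere, dist_zero_right] at hy
    linarith
end

section
/- Let (X,d) be a metric space, α ≥ 0, let A_n ⊆ X be a sequence of subsets and A ⊆ X a compact set such that the Hausdorff distance d_H(A_n, A) → 0 as n → ∞. Then H^α_∞(A) ≥ limsup_{n→∞} H^α_∞(A_n). -/
/-!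
A near-optimal countable cover of the compact set `K` can be traded for a cover by open sets at an
arbitrarily small extra cost, by thickening each member slightly. By compactness a whole
neighbourhood `thickening r K` of `K` is then still covered, and Hausdorff convergence puts `A n`
inside that neighbourhood for all large `n`, so `H^α_∞(A n)` eventually lies below any bound
exceeding `H^α_∞(K)`.
-/

open MeasureTheory Filter Set Topology
open scoped ENNReal NNReal

/-- The `α`-dimensional Hausdorff pre-measure
`H^α_∞(A) = inf {Σ_i ω_α (diam E_i / 2)^α : A ⊆ ⋃_i E_i}`, the infimum running over
countable covers of `A` with no diameter restriction. -/
noncomputable def hausdorffPre {X : Type*} [PseudoEMetricSpace X] (α : ℝ) (A : Set X) : ℝ≥0∞ :=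
  ⨅ (E : ℕ → Set X) (_ : A ⊆ ⋃ i, E i),
    ∑' i, ENNReal.ofReal (omegaHaus α) * (EMetric.diam (E i) / 2) ^ α

section HausdorffGauge

open Metric

variable {X : Type*} [PseudoEMetricSpace X] {α : ℝ}

noncomputable def hausdorffGauge (α : ℝ) (s : Set X) : ℝ≥0∞ :=
  ENNReal.ofReal (omegaHaus α) * (ediam s / 2) ^ α

theorem hausdorffPre_eq_iInf_tsum_hausdorffGauge (A : Set X) :
    hausdorffPre α A = ⨅ (E : ℕ → Set X) (_ : A ⊆ ⋃ i, E i), ∑' i, hausdorffGauge α (E i) :=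
  rfl

theorem hausdorffPre_le_tsum_hausdorffGauge {A : Set X} {E : ℕ → Set X} (h : A ⊆ ⋃ i, E i) :
    hausdorffPre α A ≤ ∑' i, hausdorffGauge α (E i) :=
  iInf₂_le E h

theorem exists_pos_hausdorffGauge_thickening_lt (hα : 0 ≤ α) {s : Set X} {b : ℝ≥0∞}
    (h : hausdorffGauge α s < b) : ∃ δ : ℝ≥0, 0 < δ ∧ hausdorffGauge α (thickening δ s) < b := by
  -- `diam (thickening δ s) ≤ diam s + 2δ`, and the right-hand side is continuous in `δ`
  set f : ℝ≥0 → ℝ≥0∞ := fun δ => ENNReal.ofReal (omegaHaus α) * ((ediam s + 2 * δ) / 2) ^ α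
  have hf : Tendsto f (𝓝[>] 0) (𝓝 (hausdorffGauge α s)) := by
    have hcont : Continuous f := by fun_prop (disch := simp)
    simpa [f, hausdorffGauge] using (hcont.tendsto 0).mono_left nhdsWithin_le_nhds
  obtain ⟨δ, hδb, hδ⟩ := ((hf.eventually_lt_const h).and self_mem_nhdsWithin).exists
  refine ⟨δ, hδ, lt_of_le_of_lt ?_ hδb⟩
  simp only [f, hausdorffGauge]
  gcongr
  exact ediam_thickening_le δ

theorem exists_isOpen_cover_tsum_hausdorffGauge_lt (hα : 0 ≤ α) {K : Set X} {c : ℝ≥0∞}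
    (h : hausdorffPre α K < c) :
    ∃ U : ℕ → Set X, (∀ i, IsOpen (U i)) ∧ K ⊆ ⋃ i, U i ∧ ∑' i, hausdorffGauge α (U i) < c := by
  obtain ⟨E, hKE, hE⟩ : ∃ E : ℕ → Set X, K ⊆ ⋃ i, E i ∧ ∑' i, hausdorffGauge α (E i) < c := by
    simpa only [hausdorffPre_eq_iInf_tsum_hausdorffGauge, iInf_lt_iff, exists_prop] using h
  set S := ∑' i, hausdorffGauge α (E i)
  obtain ⟨η, hη, hηc⟩ := ENNReal.exists_pos_sum_of_countable' (tsub_pos_of_lt hE).ne' ℕ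
  have hfin : ∀ i, hausdorffGauge α (E i) ≠ ⊤ := fun i =>
    ne_top_of_le_ne_top hE.ne_top (ENNReal.le_tsum i)
  choose δ hδ hδE using fun i =>
    exists_pos_hausdorffGauge_thickening_lt hα (ENNReal.lt_add_right (hfin i) (hη i).ne')
  refine ⟨fun i => thickening (δ i) (E i), fun i => isOpen_thickening,
    hKE.trans (iUnion_mono fun i => self_subset_thickening (by exact_mod_cast hδ i) _), ?_⟩
  calc ∑' i, hausdorffGauge α (thickening (δ i) (E i))
      ≤ ∑' i, (hausdorffGauge α (E i) + η i) := ENNReal.tsum_le_tsum fun i => (hδE i).le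
    _ = S + ∑' i, η i := ENNReal.tsum_add
    _ < S + (c - S) := ENNReal.add_lt_add_left hE.ne_top hηc
    _ = c := add_tsub_cancel_of_le hE.le

end HausdorffGauge

theorem Filter.Tendsto.eventually_subset_of_hausdorffEDist {X ι : Type*} [PseudoEMetricSpace X]
    {l : Filter ι} {A : ι → Set X} {K U : Set X} (hK : IsCompact K) (hU : IsOpen U)
    (hKU : K ⊆ U) (h : Tendsto (fun n => Metric.hausdorffEDist (A n) K) l (𝓝 0)) :
    ∀ᶠ n in l, A n ⊆ U := by
  obtain ⟨r, hr, hrU⟩ := hK.exists_thickening_subset_open hU hKU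
  filter_upwards [h.eventually_lt_const (ENNReal.ofReal_pos.mpr hr)] with n hn x hx
  exact hrU <| Metric.mem_thickening_iff_infEDist_lt.mpr <|
    (Metric.infEDist_le_hausdorffEDist_of_mem hx).trans_lt hn

/-- **Upper semicontinuity of the `∞`-Hausdorff premeasure along Hausdorff convergence.**
If `A n ⊆ X` converge to a compact set `K` in the Hausdorff distance, then
`H^α_∞(K) ≥ limsup_n H^α_∞(A n)`. -/
theorem hausdorffPre_limsup_le {X : Type*} [MetricSpace X] (α : ℝ) (hα : 0 ≤ α)
    (A : ℕ → Set X) (K : Set X) (hK : IsCompact K)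
    (hconv : Tendsto (fun n => EMetric.hausdorffEdist (A n) K) atTop (𝓝 0)) :
    Filter.limsup (fun n => hausdorffPre α (A n)) atTop ≤ hausdorffPre α K := by
  refine le_of_forall_gt_imp_ge_of_dense fun c hc => ?_
  obtain ⟨U, hUopen, hKU, hUc⟩ := exists_isOpen_cover_tsum_hausdorffGauge_lt hα hc
  have hAU : ∀ᶠ n in atTop, A n ⊆ ⋃ i, U i :=
    hconv.eventually_subset_of_hausdorffEDist hK (isOpen_iUnion hUopen) hKU
  exact limsup_le_of_le (by isBoundedDefault) <|
    hAU.mono fun n hn => (hausdorffPre_le_tsum_hausdorffGauge hn).trans hUc.le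
end
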